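/- Let X ∈ ℝ^{m×n}, c > 0, and let (U_k)_{k≥0} ⊆ ℝ^{m×r}, (V_k)_{k≥0} ⊆ ℝ^{r×n} be sequences such that for every k ≥ 1: (i) ⟨U_k − U_{k−1}, ∇_U h(U_{k−1},V_{k−1})⟩_F + (μ_k/2)·‖U_k − U_{k−1}‖_F² ≤ 0 with μ_k ≥ 2σ₁(V_{k−1}·V_{k−1}ᵀ) + c, and (ii) ⟨V_k − V_{k−1}, ∇_V h(U_k,V_{k−1})⟩_F + (λ_k/2)·‖V_k − V_{k−1}‖_F² ≤ 0 with λ_k ≥ 2σ₁(U_kᵀ·U_k) + c, where h(U,V) = ‖X − U·V‖_F², ∇_U h(U,V) = −2(X − U·V)·Vᵀ, and ∇_V h(U,V) = −2Uᵀ·(X − U·V). Then for every K ≥ 1, (c/2)·Σ_{k=1}^{K} (‖U_k − U_{k−1}‖_F² + ‖V_k − V_{k−1}‖_F²) ≤ h(U_0, V_0); consequently the series Σ_k (‖U_k − U_{k−1}‖_F² + ‖V_k − V_{k−1}‖_F²) converges and ‖U_k − U_{k−1}‖_F → 0 and ‖V_k − V_{k−1}‖_F → 0. -/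

import Mathlib

open Matrix Filter

/-!
Expanding `h` along a block step, the cross term is the gradient pairing and the quadratic term
`‖(U' - U) V‖_F²` is at most `σ₁(V Vᵀ) ‖U' - U‖_F²`, because `σ₁(S) • 1 - S` is positive
semidefinite. With `μ ≥ 2 σ₁(V Vᵀ) + c` the proximal inequality therefore gives the sufficient
decrease `h(U', V) + (c/2) ‖U' - U‖_F² ≤ h(U, V)`, and symmetrically for the `V`-step. Telescoping
and `h ≥ 0` bound the partial sums by `h(U₀, V₀)`.
-/

noncomputable def maxEigenvalue {r : ℕ} (S : Matrix (Fin r) (Fin r) ℝ) : ℝ :=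
  if h : S.IsHermitian then ⨆ i, h.eigenvalues i else 0

lemma Matrix.IsHermitian.eigenvalues_le_maxEigenvalue {r : ℕ} {S : Matrix (Fin r) (Fin r) ℝ}
    (hS : S.IsHermitian) (i : Fin r) : hS.eigenvalues i ≤ maxEigenvalue S := by
  rw [maxEigenvalue, dif_pos hS]
  exact le_ciSup (Set.finite_range _).bddAbove i

lemma Matrix.IsHermitian.posSemidef_maxEigenvalue_smul_one_sub {r : ℕ}
    {S : Matrix (Fin r) (Fin r) ℝ} (hS : S.IsHermitian) :
    (maxEigenvalue S • (1 : Matrix (Fin r) (Fin r) ℝ) - S).PosSemidef := by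
  set W := (hS.eigenvectorUnitary : Matrix (Fin r) (Fin r) ℝ)
  have hWW : W * star W = 1 := Unitary.mul_star_self_of_mem hS.eigenvectorUnitary.2
  have hdiag : maxEigenvalue S • 1 - S
      = W * diagonal (fun i => maxEigenvalue S - hS.eigenvalues i) * Wᴴ := calc
    maxEigenvalue S • 1 - S
        = W * (maxEigenvalue S • 1 - diagonal (RCLike.ofReal ∘ hS.eigenvalues)) * star W := by
      nth_rw 2 [hS.spectral_theorem]
      simp [Matrix.mul_sub, Matrix.sub_mul, hWW, W]
    _ = W * diagonal (fun i => maxEigenvalue S - hS.eigenvalues i) * Wᴴ := by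
      rw [← diagonal_one, ← diagonal_smul, diagonal_sub, star_eq_conjTranspose]
      simp
  rw [hdiag]
  refine PosSemidef.mul_mul_conjTranspose_same ?_ W
  exact posSemidef_diagonal_iff.mpr fun i => sub_nonneg.mpr (hS.eigenvalues_le_maxEigenvalue i)

lemma Matrix.IsHermitian.trace_mul_mul_transpose_le {ι : Type*} [Fintype ι] {r : ℕ}
    {S : Matrix (Fin r) (Fin r) ℝ} (hS : S.IsHermitian) (A : Matrix ι (Fin r) ℝ) :
    trace (A * S * Aᵀ) ≤ maxEigenvalue S * trace (A * Aᵀ) := by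
  have h := (hS.posSemidef_maxEigenvalue_smul_one_sub.mul_mul_conjTranspose_same A).trace_nonneg
  rw [conjTranspose_eq_transpose_of_trivial, Matrix.mul_sub, Matrix.sub_mul, trace_sub,
    Matrix.mul_smul, Matrix.mul_one, Matrix.smul_mul, trace_smul, smul_eq_mul] at h
  linarith

lemma trace_transpose_mul_self_nonneg {ι κ : Type*} [Fintype ι] [Fintype κ]
    (A : Matrix ι κ ℝ) : 0 ≤ trace (Aᵀ * A) := by
  simpa using (posSemidef_conjTranspose_mul_self A).trace_nonneg

lemma trace_mul_transpose_mul_le {ι κ : Type*} [Fintype ι] [Fintype κ] {r : ℕ}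
    (A : Matrix ι (Fin r) ℝ) (V : Matrix (Fin r) κ ℝ) :
    trace ((A * V)ᵀ * (A * V)) ≤ maxEigenvalue (V * Vᵀ) * trace (Aᵀ * A) := by
  have h := (isHermitian_mul_conjTranspose_self V).trace_mul_mul_transpose_le A
  rw [conjTranspose_eq_transpose_of_trivial, trace_mul_comm A Aᵀ] at h
  rw [trace_mul_comm]
  simpa only [transpose_mul, Matrix.mul_assoc] using h

lemma trace_transpose_mul_mul_le {ι κ : Type*} [Fintype ι] [Fintype κ] {r : ℕ}
    (U : Matrix ι (Fin r) ℝ) (B : Matrix (Fin r) κ ℝ) :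
    trace ((U * B)ᵀ * (U * B)) ≤ maxEigenvalue (Uᵀ * U) * trace (Bᵀ * B) := by
  have h := (isHermitian_conjTranspose_mul_self U).trace_mul_mul_transpose_le Bᵀ
  rw [conjTranspose_eq_transpose_of_trivial, transpose_transpose] at h
  simpa only [transpose_mul, Matrix.mul_assoc] using h

lemma trace_transpose_sub_mul_sub {ι κ : Type*} [Fintype ι] [Fintype κ] (E D : Matrix ι κ ℝ) :
    trace ((E - D)ᵀ * (E - D)) = trace (Eᵀ * E) - 2 * trace (Dᵀ * E) + trace (Dᵀ * D) := by
  have hsymm : trace (Eᵀ * D) = trace (Dᵀ * E) := by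
    rw [← trace_transpose, transpose_mul, transpose_transpose]
  rw [transpose_sub, Matrix.sub_mul, Matrix.mul_sub, Matrix.mul_sub, trace_sub, trace_sub,
    trace_sub, hsymm]
  ring

lemma trace_sub_mul_add_le_of_prox_step_left {ι κ : Type*} [Fintype ι] [Fintype κ] {r : ℕ}
    (X : Matrix ι κ ℝ) (U U' : Matrix ι (Fin r) ℝ) (V : Matrix (Fin r) κ ℝ) {μ c : ℝ}
    (hprox : trace ((U' - U)ᵀ * ((-2 : ℝ) • ((X - U * V) * Vᵀ)))
      + μ / 2 * trace ((U' - U)ᵀ * (U' - U)) ≤ 0)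
    (hμ : 2 * maxEigenvalue (V * Vᵀ) + c ≤ μ) :
    trace ((X - U' * V)ᵀ * (X - U' * V)) + c / 2 * trace ((U' - U)ᵀ * (U' - U))
      ≤ trace ((X - U * V)ᵀ * (X - U * V)) := by
  set Δ := U' - U
  have hres : X - U' * V = (X - U * V) - Δ * V := by
    rw [Matrix.sub_mul]; abel
  have hgrad : trace (Δᵀ * ((-2 : ℝ) • ((X - U * V) * Vᵀ)))
      = -2 * trace ((Δ * V)ᵀ * (X - U * V)) := by
    rw [Matrix.mul_smul, trace_smul, smul_eq_mul, transpose_mul, Matrix.mul_assoc,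
      trace_mul_comm Vᵀ, Matrix.mul_assoc]
  have hbound : maxEigenvalue (V * Vᵀ) * trace (Δᵀ * Δ) ≤ (μ - c) / 2 * trace (Δᵀ * Δ) :=
    mul_le_mul_of_nonneg_right (by linarith) (trace_transpose_mul_self_nonneg Δ)
  rw [hres, trace_transpose_sub_mul_sub]
  linarith [trace_mul_transpose_mul_le Δ V]

lemma trace_sub_mul_add_le_of_prox_step_right {ι κ : Type*} [Fintype ι] [Fintype κ] {r : ℕ}
    (X : Matrix ι κ ℝ) (U : Matrix ι (Fin r) ℝ) (V V' : Matrix (Fin r) κ ℝ) {lam c : ℝ}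
    (hprox : trace ((V' - V)ᵀ * ((-2 : ℝ) • (Uᵀ * (X - U * V))))
      + lam / 2 * trace ((V' - V)ᵀ * (V' - V)) ≤ 0)
    (hlam : 2 * maxEigenvalue (Uᵀ * U) + c ≤ lam) :
    trace ((X - U * V')ᵀ * (X - U * V')) + c / 2 * trace ((V' - V)ᵀ * (V' - V))
      ≤ trace ((X - U * V)ᵀ * (X - U * V)) := by
  set Δ := V' - V
  have hres : X - U * V' = (X - U * V) - U * Δ := by
    rw [Matrix.mul_sub]; abel
  have hgrad : trace (Δᵀ * ((-2 : ℝ) • (Uᵀ * (X - U * V))))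
      = -2 * trace ((U * Δ)ᵀ * (X - U * V)) := by
    rw [Matrix.mul_smul, trace_smul, smul_eq_mul, transpose_mul, Matrix.mul_assoc]
  have hbound : maxEigenvalue (Uᵀ * U) * trace (Δᵀ * Δ) ≤ (lam - c) / 2 * trace (Δᵀ * Δ) :=
    mul_le_mul_of_nonneg_right (by linarith) (trace_transpose_mul_self_nonneg Δ)
  rw [hres, trace_transpose_sub_mul_sub]
  linarith [trace_transpose_mul_mul_le U Δ]

lemma sum_range_le_of_add_le {f a : ℕ → ℝ} (hf : ∀ k, 0 ≤ f k) (h : ∀ k, f (k + 1) + a k ≤ f k)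
    (K : ℕ) : ∑ k ∈ Finset.range K, a k ≤ f 0 := calc
  ∑ k ∈ Finset.range K, a k ≤ ∑ k ∈ Finset.range K, (f k - f (k + 1)) :=
    Finset.sum_le_sum fun k _ => by linarith [h k]
  _ = f 0 - f K := Finset.sum_range_sub' f K
  _ ≤ f 0 := by linarith [hf K]

/-- Square-summability of successive differences of PALM iterates for
`h(U,V) = ‖X - U*V‖_F²` when the step parameters exceed the Lipschitz constants by
a margin `c > 0` (the iterate at "time k" of the paper is `k+1`):
`(c/2) Σ_{k=1}^K (‖U_k - U_{k-1}‖_F² + ‖V_k - V_{k-1}‖_F²) ≤ h(U_0,V_0)`,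
the series converges, and `‖U_k - U_{k-1}‖_F → 0`, `‖V_k - V_{k-1}‖_F → 0`.
The Frobenius inner product is `trace (Aᵀ * B)` and `‖A‖_F² = trace (Aᵀ * A)`;
`∇_U h(U,V) = -2 (X - U*V) Vᵀ`, `∇_V h(U,V) = -2 Uᵀ (X - U*V)`. -/
theorem stmt_9 {m n r : ℕ} (X : Matrix (Fin m) (Fin n) ℝ) (c : ℝ) (hc : 0 < c)
    (U : ℕ → Matrix (Fin m) (Fin r) ℝ) (V : ℕ → Matrix (Fin r) (Fin n) ℝ)
    (μ lam : ℕ → ℝ)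
    (hUprox : ∀ k : ℕ,
      Matrix.trace ((U (k+1) - U k)ᵀ * ((-2 : ℝ) • ((X - U k * V k) * (V k)ᵀ)))
        + μ (k+1) / 2 * Matrix.trace ((U (k+1) - U k)ᵀ * (U (k+1) - U k)) ≤ 0)
    (hμ : ∀ k : ℕ, 2 * maxEigenvalue (V k * (V k)ᵀ) + c ≤ μ (k+1))
    (hVprox : ∀ k : ℕ,
      Matrix.trace ((V (k+1) - V k)ᵀ * ((-2 : ℝ) • ((U (k+1))ᵀ * (X - U (k+1) * V k))))
        + lam (k+1) / 2 * Matrix.trace ((V (k+1) - V k)ᵀ * (V (k+1) - V k)) ≤ 0)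
    (hlam : ∀ k : ℕ, 2 * maxEigenvalue ((U (k+1))ᵀ * U (k+1)) + c ≤ lam (k+1)) :
    (∀ K : ℕ, 1 ≤ K →
      c / 2 * ∑ k ∈ Finset.range K,
          (Matrix.trace ((U (k+1) - U k)ᵀ * (U (k+1) - U k))
            + Matrix.trace ((V (k+1) - V k)ᵀ * (V (k+1) - V k))) ≤
        Matrix.trace ((X - U 0 * V 0)ᵀ * (X - U 0 * V 0))) ∧
    Summable (fun k : ℕ =>
      Matrix.trace ((U (k+1) - U k)ᵀ * (U (k+1) - U k))
        + Matrix.trace ((V (k+1) - V k)ᵀ * (V (k+1) - V k))) ∧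
    Tendsto (fun k : ℕ =>
        Real.sqrt (Matrix.trace ((U (k+1) - U k)ᵀ * (U (k+1) - U k))))
      atTop (nhds 0) ∧
    Tendsto (fun k : ℕ =>
        Real.sqrt (Matrix.trace ((V (k+1) - V k)ᵀ * (V (k+1) - V k))))
      atTop (nhds 0) := by
  set tU := fun k => Matrix.trace ((U (k+1) - U k)ᵀ * (U (k+1) - U k))
  set tV := fun k => Matrix.trace ((V (k+1) - V k)ᵀ * (V (k+1) - V k))
  set h := fun k => Matrix.trace ((X - U k * V k)ᵀ * (X - U k * V k))
  have hdescent (k : ℕ) : h (k + 1) + c / 2 * (tU k + tV k) ≤ h k := by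
    have hUstep := trace_sub_mul_add_le_of_prox_step_left X (U k) (U (k+1)) (V k) (hUprox k) (hμ k)
    have hVstep :=
      trace_sub_mul_add_le_of_prox_step_right X (U (k+1)) (V k) (V (k+1)) (hVprox k) (hlam k)
    simp only [h, tU, tV]
    linarith
  have hbound (K : ℕ) : c / 2 * ∑ k ∈ Finset.range K, (tU k + tV k) ≤ h 0 := by
    rw [Finset.mul_sum]
    exact sum_range_le_of_add_le (a := fun k => c / 2 * (tU k + tV k))
      (fun k => trace_transpose_mul_self_nonneg (X - U k * V k)) hdescent K
  have htU (k : ℕ) : 0 ≤ tU k := trace_transpose_mul_self_nonneg (U (k+1) - U k)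
  have htV (k : ℕ) : 0 ≤ tV k := trace_transpose_mul_self_nonneg (V (k+1) - V k)
  have hsum : Summable fun k => tU k + tV k :=
    summable_of_sum_range_le (c := h 0 / (c / 2)) (fun k => add_nonneg (htU k) (htV k))
      fun K => (le_div_iff₀' (by positivity)).mpr (hbound K)
  have hsqrt := Real.continuous_sqrt.tendsto' 0 0 Real.sqrt_zero
  refine ⟨fun K _ => hbound K, hsum, hsqrt.comp ?_, hsqrt.comp ?_⟩
  · exact (hsum.of_nonneg_of_le htU fun k => le_add_of_nonneg_right (htV k)).tendsto_atTop_zero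
  · exact (hsum.of_nonneg_of_le htV fun k => le_add_of_nonneg_left (htU k)).tendsto_atTop_zero
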